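/- arXiv:1602.06318 — 3 statements merged into one kernel-verified Lean document; each statement's English description precedes it below -/
import Mathlib

section
/- Let N, K, p be positive integers with p ≥ 1 and K dividing N, and let M = N/K. For i = 1,…,K define D_i(x) = Σ_{l∈ℤ} sinc(π(i/K + l))^{p+1} · exp(−2πi·x·(i + lK)) (the series converges absolutely), Q_{p,M}(i/K) = (1/N) Σ_{m=1}^{N} |D_i(m/N)|², and ψ_i(x) = D_i(x) / Q_{p,M}(i/K)^{1/2}. Then Q_{p,M}(i/K) > 0 for every i, and for all 1 ≤ i, j ≤ K one has (1/N) Σ_{m=1}^{N} ψ_i(m/N) · conj(ψ_j(m/N)) = δ_{ij}, i.e. the functions ψ_1,…,ψ_K are orthonormal with respect to the discrete inner product at the design points m/N. -/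
open Real MeasureTheory ComplexConjugate

/-- `sinc x = sin x / x` for `x ≠ 0`, and `sinc 0 = 1`. -/
noncomputable def sinc (x : ℝ) : ℝ := if x = 0 then 1 else Real.sin x / x

/-- The `l`-th term of the sinc-series defining the (scaled) discrete Fourier transform
`D_i` of the periodic B-splines of degree `p` with `K` knots. -/
noncomputable def Dterm (K p : ℕ) (i : ℕ) (x : ℝ) (l : ℤ) : ℂ :=
  ((_root_.sinc (Real.pi * ((i : ℝ) / K + l)) ^ (p + 1) : ℝ) : ℂ) *
    Complex.exp (-2 * (Real.pi : ℂ) * Complex.I * (x : ℂ) * ((i : ℂ) + (l : ℂ) * (K : ℂ)))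

/-- `D_i(x) = Σ_{l ∈ ℤ} sinc(π(i/K + l))^{p+1} exp(−2πi x (i + lK))`. -/
noncomputable def Dfun (K p : ℕ) (i : ℕ) (x : ℝ) : ℂ := ∑' l : ℤ, Dterm K p i x l

/-- `Q_{p,M}(i/K) = (1/N) Σ_{m=1}^N |D_i(m/N)|²`. -/
noncomputable def Qdisc (N K p : ℕ) (i : ℕ) : ℝ :=
  (1 / N : ℝ) * ∑ m ∈ Finset.Icc (1 : ℕ) N, ‖Dfun K p i ((m : ℝ) / N)‖ ^ 2

/-- The Demmler–Reinsch basis function `ψ_i(x) = D_i(x)/Q_{p,M}(i/K)^{1/2}`. -/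
noncomputable def psiDR (N K p : ℕ) (i : ℕ) (x : ℝ) : ℂ :=
  Dfun K p i x / ((Real.sqrt (Qdisc N K p i) : ℝ) : ℂ)

/-!
At a design point `m / N` the `l`-th term of `D_i` is `c_l ω ^ (m (i + l K))` with
`ω = exp (-2πi / N)`. Multiplying out the absolutely convergent series, `∑ₘ D_i(m/N) conj D_j(m/N)`
becomes a double series of geometric sums `∑ₘ ζ ^ m` over `N`-th roots of unity
`ζ = ω ^ (i - j + (l - l') K)`; since `K ∣ N` and `0 < |i - j| < K`, none of these `ζ` is `1`, so
every geometric sum vanishes.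

`Q` is positive because of the design point `m = N`, where `D_i(1) = ∑ₗ sinc (π (t + l)) ^ (p + 1)`
with `t = i / K`. For `t < 1`, pairing `l = n` with `l = -n - 1` splits this into two series
`∑ₙ (±1) ^ n aₙ` with strictly decreasing positive `aₙ`, which are positive by the alternating
series bound; for `t = 1` only the term `l = -1` survives.
-/

lemma tsum_neg_one_pow_mul_pos {f : ℕ → ℝ} (hs : Summable f) (hf : StrictAnti f) :
    0 < ∑' n, (-1) ^ n * f n := by
  have hf0 : ∀ n, 0 ≤ f n := fun n => hf.antitone.le_of_tendsto hs.tendsto_atTop_zero n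
  have hsum : Summable fun n => (-1 : ℝ) ^ n * f n :=
    hs.of_norm_bounded fun n => by simp [abs_of_nonneg (hf0 n)]
  have hle := hf.antitone.alternating_series_le_tendsto hsum.hasSum.tendsto_sum_nat 1
  simp only [Finset.sum_range_succ, Finset.sum_range_zero] at hle
  linarith [hf (Nat.zero_lt_one)]

lemma Finset.sum_Icc_one_pow_eq_zero {R : Type*} [CommRing R] [NoZeroDivisors R] {ζ : R} {N : ℕ}
    (h1 : ζ ≠ 1) (hN : ζ ^ N = 1) : ∑ m ∈ Finset.Icc 1 N, ζ ^ m = 0 := by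
  have hgeom : ∑ m ∈ Finset.range N, ζ ^ m = 0 := by
    have := geom_sum_mul ζ N
    rw [hN, sub_self, mul_eq_zero] at this
    exact this.resolve_right (sub_ne_zero.mpr h1)
  rw [← Finset.Ico_add_one_right_eq_Icc, Finset.sum_Ico_eq_sum_range]
  simp only [pow_add, pow_one, ← Finset.mul_sum, Nat.add_sub_cancel, hgeom, mul_zero]

lemma sum_tsum_mul_conj_tsum {α β : Type*} (s : Finset α) {f g : α → β → ℂ}
    (hf : ∀ a, Summable fun b => ‖f a b‖) (hg : ∀ a, Summable fun b => ‖g a b‖) :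
    ∑ a ∈ s, (∑' b, f a b) * conj (∑' b, g a b) =
      ∑' z : β × β, ∑ a ∈ s, f a z.1 * conj (g a z.2) := by
  have hg' : ∀ a, Summable fun b => ‖conj (g a b)‖ := fun a => by simpa using hg a
  rw [Summable.tsum_finsetSum fun a _ => summable_mul_of_summable_norm (hf a) (hg' a)]
  refine Finset.sum_congr rfl fun a _ => ?_
  rw [Complex.conj_tsum, tsum_mul_tsum_of_summable_norm (hf a) (hg' a)]

lemma Int.not_natCast_dvd_sub_add_mul {N K i j : ℕ} (hKN : K ∣ N) (hi : 1 ≤ i) (hiK : i ≤ K)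
    (hj : 1 ≤ j) (hjK : j ≤ K) (hij : i ≠ j) (n : ℤ) : ¬ (N : ℤ) ∣ i - j + n * K := by
  intro h
  have hK : (K : ℤ) ∣ i - j :=
    (dvd_add_left (dvd_mul_left _ n)).mp ((Int.natCast_dvd_natCast.mpr hKN).trans h)
  have := Int.eq_zero_of_abs_lt_dvd hK (abs_lt.mpr ⟨by omega, by omega⟩)
  omega

namespace Real

lemma abs_sinc_le_inv_abs {x : ℝ} (hx : x ≠ 0) : |sinc x| ≤ |x|⁻¹ := by
  rw [sinc_of_ne_zero hx, abs_div, div_eq_mul_inv]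
  exact mul_le_of_le_one_left (by positivity) (abs_sin_le_one x)

lemma sinc_pi_mul_add_nat {t : ℝ} (n : ℕ) (ht : t + n ≠ 0) :
    sinc (π * (t + n)) = (-1) ^ n * (sin (π * t) / (π * (t + n))) := by
  rw [sinc_of_ne_zero (mul_ne_zero pi_ne_zero ht), mul_add π t, mul_comm π (n : ℝ),
    sin_add_nat_mul_pi, mul_div_assoc, mul_comm (n : ℝ) π]

lemma summable_abs_sinc_pi_mul_add_int_pow (t : ℝ) {q : ℕ} (hq : 2 ≤ q) :
    Summable fun l : ℤ => |sinc (π * (t + l))| ^ q := by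
  have hg : Summable fun l : ℤ => (π ^ 2)⁻¹ * (1 / |l + t| ^ (2 : ℝ)) :=
    ((summable_one_div_int_add_rpow t 2).mpr one_lt_two).mul_left _
  refine hg.of_norm_bounded_eventually ?_
  have hfin : {l : ℤ | t + l = 0}.Finite :=
    Set.Subsingleton.finite fun a ha b hb =>
      Int.cast_injective (α := ℝ) (by linarith [ha.out, hb.out])
  filter_upwards [hfin.compl_mem_cofinite] with l hl
  have hl : π * (t + l) ≠ 0 := mul_ne_zero pi_ne_zero hl
  calc ‖|sinc (π * (t + l))| ^ q‖ = |sinc (π * (t + l))| ^ q := by simp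
    _ ≤ |sinc (π * (t + l))| ^ 2 := pow_le_pow_of_le_one (abs_nonneg _) (abs_sinc_le_one _) hq
    _ ≤ |π * (t + l)|⁻¹ ^ 2 := pow_le_pow_left₀ (abs_nonneg _) (abs_sinc_le_inv_abs hl) 2
    _ = (π ^ 2)⁻¹ * (1 / |l + t| ^ (2 : ℝ)) := by
      rw [rpow_two, abs_mul, abs_of_pos pi_pos, add_comm t]; field_simp

lemma tsum_sinc_pi_mul_add_nat_pow_pos {t : ℝ} (ht0 : 0 < t) (ht1 : t < 1) {q : ℕ} (hq : 2 ≤ q) :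
    0 < ∑' n : ℕ, sinc (π * (t + n)) ^ q := by
  set a : ℕ → ℝ := fun n => (sin (π * t) / (π * (t + n))) ^ q
  have hsin : 0 < sin (π * t) := sin_pos_of_pos_of_lt_pi (by positivity) (by nlinarith [pi_pos])
  have ha : StrictAnti a := fun m n hmn => by
    have : (m : ℝ) < n := by exact_mod_cast hmn
    dsimp only [a]
    gcongr
  have hterm : ∀ n : ℕ, sinc (π * (t + n)) ^ q = ((-1) ^ q) ^ n * a n := fun n => by
    rw [sinc_pi_mul_add_nat n (by positivity), mul_pow, ← pow_mul, pow_mul']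
  have has : Summable a := by
    refine ((summable_abs_sinc_pi_mul_add_int_pow t hq).comp_injective Nat.cast_injective).congr
      fun n => ?_
    rw [Function.comp_apply, Int.cast_natCast, sinc_pi_mul_add_nat n (by positivity), abs_mul,
      abs_pow, abs_neg, abs_one, one_pow, one_mul, abs_of_pos (div_pos hsin (by positivity))]
  simp_rw [hterm]
  rcases Nat.even_or_odd q with hq | hq
  · simp only [hq.neg_one_pow, one_pow, one_mul]
    exact has.tsum_pos (ha.antitone.le_of_tendsto has.tendsto_atTop_zero) 0 (by positivity)
  · simpa only [hq.neg_one_pow] using tsum_neg_one_pow_mul_pos has ha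

lemma tsum_sinc_pi_mul_add_int_pow_pos {t : ℝ} (ht0 : 0 < t) (ht1 : t ≤ 1) {q : ℕ} (hq : 2 ≤ q) :
    0 < ∑' l : ℤ, sinc (π * (t + l)) ^ q := by
  rcases ht1.lt_or_eq with ht1 | rfl
  · have hs : Summable fun l : ℤ => sinc (π * (t + l)) ^ q :=
      (summable_abs_sinc_pi_mul_add_int_pow t hq).of_norm_bounded fun l => by simp
    have hneg : ∀ n : ℕ, sinc (π * (t + ((-(n + 1) : ℤ) : ℝ))) = sinc (π * ((1 - t) + n)) :=
      fun n => by rw [← sinc_neg]; push_cast; ring_nf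
    have hnat : Summable fun n : ℕ => sinc (π * (t + (n : ℤ))) ^ q :=
      hs.comp_injective Nat.cast_injective
    have hnegs : Summable fun n : ℕ => sinc (π * (t + ((-(n + 1) : ℤ) : ℝ))) ^ q :=
      hs.comp_injective fun m n h => by simpa using h
    rw [tsum_of_nat_of_neg_add_one (f := fun l : ℤ => sinc (π * (t + l)) ^ q) hnat hnegs]
    simp only [Int.cast_natCast, hneg]
    exact add_pos (tsum_sinc_pi_mul_add_nat_pow_pos ht0 ht1 hq)
      (tsum_sinc_pi_mul_add_nat_pow_pos (by linarith) (by linarith) hq)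
  · rw [tsum_eq_single (-1) fun l hl => ?_]
    · simp
    have hl : (1 + l : ℝ) ≠ 0 := fun h => hl (by exact_mod_cast (by linarith : (l : ℝ) = -1))
    rw [sinc_of_ne_zero (mul_ne_zero pi_ne_zero hl), mul_comm, ← Int.cast_one, ← Int.cast_add,
      sin_int_mul_pi, zero_div, zero_pow (by omega)]

end Real

lemma Complex.sum_Icc_exp_int_div_pow_eq_zero {N : ℕ} {d : ℤ} (hd : ¬ (N : ℤ) ∣ d) :
    ∑ m ∈ Finset.Icc 1 N, Complex.exp (-2 * π * Complex.I * d / N) ^ m = 0 := by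
  rcases N.eq_zero_or_pos with rfl | hN
  · simp
  have hω := Complex.isPrimitiveRoot_exp N hN.ne'
  have hζ : Complex.exp (-2 * π * Complex.I * d / N) =
      Complex.exp (2 * π * Complex.I / N) ^ (-d) := by
    rw [← Complex.exp_int_mul]; push_cast; ring_nf
  rw [hζ]
  refine Finset.sum_Icc_one_pow_eq_zero (fun h => hd ?_) ?_
  · simpa using (hω.zpow_eq_one_iff_dvd (-d)).mp h
  · rw [← zpow_natCast, ← zpow_mul, mul_comm (-d), zpow_mul, zpow_natCast, hω.pow_eq_one, one_zpow]

theorem sinc_eq_real_sinc : _root_.sinc = Real.sinc := rfl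

lemma norm_Dterm (K p i : ℕ) (x : ℝ) (l : ℤ) :
    ‖Dterm K p i x l‖ = |Real.sinc (π * (i / K + l))| ^ (p + 1) := by
  rw [Dterm, norm_mul, Complex.norm_real, Real.norm_eq_abs, abs_pow, sinc_eq_real_sinc,
    Complex.norm_exp]
  simp

lemma summable_norm_Dterm (K : ℕ) {p : ℕ} (hp : 1 ≤ p) (i : ℕ) (x : ℝ) :
    Summable fun l : ℤ => ‖Dterm K p i x l‖ := by
  simpa only [norm_Dterm] using Real.summable_abs_sinc_pi_mul_add_int_pow _ (by omega : 2 ≤ p + 1)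

lemma Dfun_one (K p i : ℕ) :
    Dfun K p i 1 = ((∑' l : ℤ, Real.sinc (π * (i / K + l)) ^ (p + 1) : ℝ) : ℂ) := by
  rw [Complex.ofReal_tsum]
  refine tsum_congr fun l => ?_
  have hexp : -2 * (π : ℂ) * Complex.I * ((1 : ℝ) : ℂ) * (i + l * K) =
      ((-(i + l * K) : ℤ) : ℂ) * (2 * π * Complex.I) := by push_cast; ring
  rw [Dterm, hexp, Complex.exp_int_mul_two_pi_mul_I, mul_one, sinc_eq_real_sinc]

lemma Qdisc_pos {N : ℕ} (hN : 0 < N) (K : ℕ) {p : ℕ} (hp : 1 ≤ p) {i : ℕ} (hi : 1 ≤ i)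
    (hiK : i ≤ K) : 0 < Qdisc N K p i := by
  have hK : (0 : ℝ) < K := by exact_mod_cast hi.trans hiK
  have ht0 : (0 : ℝ) < i / K := div_pos (by exact_mod_cast hi) hK
  have ht1 : (i : ℝ) / K ≤ 1 := (div_le_one hK).mpr (by exact_mod_cast hiK)
  have hD : 0 < ‖Dfun K p i ((N : ℝ) / N)‖ ^ 2 := by
    rw [div_self (by positivity), Dfun_one, Complex.norm_real, Real.norm_eq_abs, sq_abs]
    exact pow_pos (Real.tsum_sinc_pi_mul_add_int_pow_pos ht0 ht1 (by omega)) 2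
  exact mul_pos (by positivity) (hD.trans_le (Finset.single_le_sum (f := fun m : ℕ =>
    ‖Dfun K p i ((m : ℝ) / N)‖ ^ 2) (fun m _ => by positivity) (Finset.mem_Icc.mpr ⟨hN, le_rfl⟩)))

lemma Dterm_mul_conj_Dterm {N : ℕ} (hN : N ≠ 0) (K p i j m : ℕ) (l l' : ℤ) :
    Dterm K p i (m / N) l * conj (Dterm K p j (m / N) l') =
      ((Real.sinc (π * (i / K + l)) ^ (p + 1) * Real.sinc (π * (j / K + l')) ^ (p + 1) : ℝ) : ℂ) *
        Complex.exp (-2 * π * Complex.I * ((i - j + (l - l') * K : ℤ) : ℂ) / N) ^ m := by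
  have hN' : (N : ℂ) ≠ 0 := Nat.cast_ne_zero.mpr hN
  rw [Dterm, Dterm, map_mul, Complex.conj_ofReal, ← Complex.exp_conj, mul_mul_mul_comm,
    ← Complex.exp_add, ← Complex.exp_nat_mul, sinc_eq_real_sinc, Complex.ofReal_mul]
  congr 2
  simp only [map_mul, map_neg, map_add, map_ofNat, Complex.conj_ofReal, Complex.conj_I,
    map_natCast, map_intCast]
  push_cast
  field_simp
  ring

lemma sum_Dfun_mul_conj_eq_zero {N K : ℕ} (hN : N ≠ 0) (hKN : K ∣ N) {p : ℕ} (hp : 1 ≤ p)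
    {i j : ℕ} (hi : 1 ≤ i) (hiK : i ≤ K) (hj : 1 ≤ j) (hjK : j ≤ K) (hij : i ≠ j) :
    ∑ m ∈ Finset.Icc 1 N, Dfun K p i (m / N) * conj (Dfun K p j (m / N)) = 0 := by
  simp only [Dfun]
  rw [sum_tsum_mul_conj_tsum _ (fun _ => summable_norm_Dterm K hp i _)
    (fun _ => summable_norm_Dterm K hp j _)]
  refine (tsum_congr fun z => ?_).trans tsum_zero
  simp only [Dterm_mul_conj_Dterm hN, ← Finset.mul_sum,
    Complex.sum_Icc_exp_int_div_pow_eq_zero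
      (Int.not_natCast_dvd_sub_add_mul hKN hi hiK hj hjK hij (z.1 - z.2)), mul_zero]

lemma sum_Dfun_mul_conj_self {N : ℕ} (hN : N ≠ 0) (K p i : ℕ) :
    ∑ m ∈ Finset.Icc 1 N, Dfun K p i (m / N) * conj (Dfun K p i (m / N)) =
      ((N * Qdisc N K p i : ℝ) : ℂ) := by
  simp only [Complex.mul_conj, Complex.normSq_eq_norm_sq, Qdisc]
  push_cast
  field_simp

lemma sum_psiDR_mul_conj (N K p i j : ℕ) :
    ∑ m ∈ Finset.Icc 1 N, psiDR N K p i (m / N) * conj (psiDR N K p j (m / N)) =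
      (∑ m ∈ Finset.Icc 1 N, Dfun K p i (m / N) * conj (Dfun K p j (m / N))) /
        ((√(Qdisc N K p i) * √(Qdisc N K p j) : ℝ) : ℂ) := by
  simp only [psiDR, map_div₀, Complex.conj_ofReal, div_mul_div_comm, ← Finset.sum_div,
    Complex.ofReal_mul]

theorem stmt0_general (N K p : ℕ) (hp : 1 ≤ p) (hN : 0 < N) (hKN : K ∣ N) :
    (∀ i x, 1 ≤ i → i ≤ K → Summable (fun l : ℤ => ‖Dterm K p i x l‖)) ∧
    (∀ i, 1 ≤ i → i ≤ K → 0 < Qdisc N K p i) ∧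
    (∀ i j, 1 ≤ i → i ≤ K → 1 ≤ j → j ≤ K →
      (1 / N : ℂ) * ∑ m ∈ Finset.Icc (1 : ℕ) N,
          psiDR N K p i ((m : ℝ) / N) * conj (psiDR N K p j ((m : ℝ) / N)) =
        if i = j then 1 else 0) := by
  refine ⟨fun i x _ _ => summable_norm_Dterm K hp i x, fun i hi hiK => Qdisc_pos hN K hp hi hiK,
    fun i j hi hiK hj hjK => ?_⟩
  rw [sum_psiDR_mul_conj]
  split_ifs with hij
  · subst hij
    have hQ := Qdisc_pos hN K hp hi hiK
    have hQ' : (Qdisc N K p i : ℂ) ≠ 0 := Complex.ofReal_ne_zero.mpr hQ.ne'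
    have hN' : (N : ℂ) ≠ 0 := Nat.cast_ne_zero.mpr hN.ne'
    rw [sum_Dfun_mul_conj_self hN.ne', Real.mul_self_sqrt hQ.le]
    push_cast
    field_simp
  · rw [sum_Dfun_mul_conj_eq_zero hN.ne' hKN hp hi hiK hj hjK hij, zero_div, mul_zero]

theorem stmt0 (N K p : ℕ) (hp : 1 ≤ p) (hN : 0 < N) (hK : 0 < K) (hKN : K ∣ N) :
    (∀ i x, 1 ≤ i → i ≤ K → Summable (fun l : ℤ => ‖Dterm K p i x l‖)) ∧
    (∀ i, 1 ≤ i → i ≤ K → 0 < Qdisc N K p i) ∧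
    (∀ i j, 1 ≤ i → i ≤ K → 1 ≤ j → j ≤ K →
      (1 / N : ℂ) * ∑ m ∈ Finset.Icc (1 : ℕ) N,
          psiDR N K p i ((m : ℝ) / N) * conj (psiDR N K p j ((m : ℝ) / N)) =
        if i = j then 1 else 0) :=
  stmt0_general N K p hp hN hKN
end

section
/- Let p ≥ 1 and K ≥ 1 be integers. For 1 ≤ i ≤ K define D_i(x) = Σ_{l∈ℤ} sinc(π(i/K + l))^{p+1} exp(−2πi·x·(i + lK)), Q_{2p}(z) = Σ_{l∈ℤ} sinc(π(z + l))^{2p+2}, and φ_i(x) = D_i(x)/Q_{2p}(i/K)^{1/2}. Then for all 1 ≤ i, j ≤ K, ∫_0^1 φ_i(x) · conj(φ_j(x)) dx = δ_{ij}. -/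
open Real MeasureTheory ComplexConjugate

/-- `Q_n(z) = Σ_{l ∈ ℤ} sinc(π(z+l))^n` (here `n` is the power, so `Q_{2p}` of the
paper is `Qs (2*p+2)`). -/
noncomputable def Qs (n : ℕ) (z : ℝ) : ℝ := ∑' l : ℤ, _root_.sinc (Real.pi * (z + l)) ^ n

/-- The L²-orthonormal Demmler–Reinsch basis function
`φ_i(x) = D_i(x)/Q_{2p}(i/K)^{1/2}`. -/
noncomputable def phiDR (K p : ℕ) (i : ℕ) (x : ℝ) : ℂ :=
  Dfun K p i x / ((Real.sqrt (Qs (2 * p + 2) ((i : ℝ) / K)) : ℝ) : ℂ)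

theorem abs_real_sinc_le_inv_abs {x : ℝ} (hx : x ≠ 0) : |Real.sinc x| ≤ |x|⁻¹ := by
  rw [Real.sinc_of_ne_zero hx, abs_div, div_le_iff₀ (abs_pos.mpr hx),
    inv_mul_cancel₀ (abs_ne_zero.mpr hx)]
  exact abs_sin_le_one x

theorem summable_abs_sinc_pi_mul_pow (x : ℝ) {n : ℕ} (hn : 2 ≤ n) :
    Summable fun l : ℤ => |_root_.sinc (π * (x + l))| ^ n := by
  rw [sinc_eq_real_sinc]
  refine .of_norm_bounded_eventually ((Real.summable_one_div_int_add_rpow x 2).mpr one_lt_two) ?_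
  have hfin : {l : ℤ | (l : ℝ) + x = 0}.Finite := Set.Subsingleton.finite fun l hl l' hl' => by
    exact_mod_cast add_right_cancel (hl.trans hl'.symm)
  filter_upwards [hfin.compl_mem_cofinite] with l hl
  replace hl : (l : ℝ) + x ≠ 0 := hl
  rw [Real.norm_eq_abs, abs_pow, abs_abs, Real.rpow_two, one_div, ← inv_pow, add_comm]
  calc |Real.sinc (π * (l + x))| ^ n ≤ |Real.sinc (π * (l + x))| ^ 2 :=
        pow_le_pow_of_le_one (abs_nonneg _) (Real.abs_sinc_le_one _) hn
    _ ≤ |π * (l + x)|⁻¹ ^ 2 := by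
        gcongr
        exact abs_real_sinc_le_inv_abs (mul_ne_zero pi_ne_zero hl)
    _ ≤ |(l : ℝ) + x|⁻¹ ^ 2 := by
        refine pow_le_pow_left₀ (by positivity) (inv_anti₀ (abs_pos.mpr hl) ?_) 2
        rw [abs_mul, abs_of_pos pi_pos]
        exact le_mul_of_one_le_left (abs_nonneg _) (by linarith [pi_gt_three])

theorem Qs_pos {n : ℕ} (hn : Even n) (hn2 : 2 ≤ n) (z : ℝ) : 0 < Qs n z := by
  have hsum : Summable fun l : ℤ => _root_.sinc (π * (z + l)) ^ n :=
    (summable_abs_sinc_pi_mul_pow z hn2).congr fun l => hn.pow_abs _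
  refine hsum.tsum_pos (fun l => hn.pow_nonneg _) (-⌊z⌋) (hn.pow_pos ?_)
  rw [Int.cast_neg, ← sub_eq_add_neg, ← Int.fract, sinc_eq_real_sinc]
  rcases (Int.fract_nonneg z).eq_or_lt with h | h
  · simp [← h]
  · rw [Real.sinc_of_ne_zero (by positivity)]
    exact (div_pos (sin_pos_of_pos_of_lt_pi (by positivity)
      (by nlinarith [Int.fract_lt_one z, pi_pos])) (by positivity)).ne'

section TrigSeries

open Complex

theorem integral_exp_neg_two_pi_I_mul_int (m : ℤ) :
    ∫ x in (0 : ℝ)..1, exp (-2 * π * I * x * m) = if m = 0 then 1 else 0 := by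
  split_ifs with hm
  · simp [hm]
  have hc : -2 * π * I * m ≠ 0 := by simp [hm, pi_ne_zero]
  have hlin (x : ℝ) : -2 * π * I * x * m = -2 * π * I * m * x := by ring
  simp_rw [hlin]
  rw [integral_exp_mul_complex hc, ofReal_one, mul_one, ofReal_zero, mul_zero, Complex.exp_zero,
    show -2 * π * I * m = (-m : ℤ) * (2 * π * I) by push_cast; ring,
    exp_int_mul_two_pi_mul_I, sub_self, zero_div]

variable {ι : Type*}

noncomputable def trigSeries (a : ι → ℂ) (ν : ι → ℤ) (x : ℝ) : ℂ :=
  ∑' l, a l * exp (-2 * π * I * x * ν l)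

theorem norm_mul_exp_neg_two_pi_I (c : ℂ) (x : ℝ) (m : ℤ) :
    ‖c * exp (-2 * π * I * x * m)‖ = ‖c‖ := by
  rw [norm_mul, show -2 * π * I * x * m = ((-2 * π * x * m : ℝ) : ℂ) * I by push_cast; ring,
    norm_exp_ofReal_mul_I, mul_one]

theorem trigSeries_mul_conj {a b : ι → ℂ} (ha : Summable (‖a ·‖)) (hb : Summable (‖b ·‖))
    (ν μ : ι → ℤ) (x : ℝ) :
    trigSeries a ν x * conj (trigSeries b μ x) =
      ∑' q : ι × ι, a q.1 * conj (b q.2) * exp (-2 * π * I * x * (ν q.1 - μ q.2 : ℤ)) := by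
  rw [trigSeries, trigSeries, conj_tsum, tsum_mul_tsum_of_summable_norm
    (by simpa only [norm_mul_exp_neg_two_pi_I] using ha)
    (by simpa only [RCLike.norm_conj, norm_mul_exp_neg_two_pi_I] using hb)]
  refine tsum_congr fun q => ?_
  rw [map_mul, ← exp_conj, mul_mul_mul_comm, ← Complex.exp_add]
  congr 2
  simp only [map_mul, map_neg, map_ofNat, conj_ofReal, conj_I, map_intCast]
  push_cast
  ring

theorem integral_trigSeries_mul_conj [Countable ι] {a b : ι → ℂ} (ha : Summable (‖a ·‖))
    (hb : Summable (‖b ·‖)) (ν μ : ι → ℤ) :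
    ∫ x in (0 : ℝ)..1, trigSeries a ν x * conj (trigSeries b μ x) =
      ∑' q : ι × ι, if ν q.1 = μ q.2 then a q.1 * conj (b q.2) else 0 := by
  have hint (q : ι × ι) : IntegrableOn
      (fun x : ℝ => a q.1 * conj (b q.2) * exp (-2 * π * I * x * (ν q.1 - μ q.2 : ℤ)))
      (Set.Ioc 0 1) :=
    Continuous.integrableOn_Ioc (by fun_prop)
  have hsum : Summable fun q : ι × ι => ∫ x in Set.Ioc (0 : ℝ) 1,
      ‖a q.1 * conj (b q.2) * exp (-2 * π * I * x * (ν q.1 - μ q.2 : ℤ))‖ := by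
    simpa only [norm_mul_exp_neg_two_pi_I, setIntegral_const, Real.volume_real_Ioc, sub_zero,
      zero_le_one, max_eq_left, one_smul] using
      ha.mul_norm (hb.congr fun l => (RCLike.norm_conj _).symm)
  simp_rw [intervalIntegral.integral_of_le zero_le_one, trigSeries_mul_conj ha hb,
    ← integral_tsum_of_summable_integral_norm hint hsum, integral_const_mul,
    ← intervalIntegral.integral_of_le zero_le_one, integral_exp_neg_two_pi_I_mul_int, sub_eq_zero]
  simp only [mul_ite, mul_one, mul_zero]

theorem integral_trigSeries_mul_conj_eq_zero [Countable ι] {a b : ι → ℂ}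
    (ha : Summable (‖a ·‖)) (hb : Summable (‖b ·‖)) {ν μ : ι → ℤ} (hνμ : ∀ l l', ν l ≠ μ l') :
    ∫ x in (0 : ℝ)..1, trigSeries a ν x * conj (trigSeries b μ x) = 0 := by
  simp [integral_trigSeries_mul_conj ha hb, hνμ]

theorem integral_trigSeries_mul_conj_self [Countable ι] {a b : ι → ℂ}
    (ha : Summable (‖a ·‖)) (hb : Summable (‖b ·‖)) {ν : ι → ℤ} (hν : ν.Injective) :
    ∫ x in (0 : ℝ)..1, trigSeries a ν x * conj (trigSeries b ν x) = ∑' l, a l * conj (b l) := by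
  rw [integral_trigSeries_mul_conj ha hb, ← (Function.Injective.tsum_eq (g := fun l => (l, l))
    (fun l l' h => congrArg Prod.fst h) ?_)]
  · simp
  rintro ⟨l, l'⟩ hq
  rw [Function.mem_support, ite_ne_right_iff, hν.eq_iff] at hq
  obtain ⟨hll' : l = l', -⟩ := hq
  exact ⟨l, by rw [hll']⟩

end TrigSeries

theorem Int.eq_of_add_mul_eq_add_mul {K i j l l' : ℤ} (h : i + l * K = j + l' * K)
    (hij : |i - j| < K) : i = j :=
  sub_eq_zero.mp (Int.eq_zero_of_abs_lt_dvd ⟨l' - l, by linarith⟩ hij)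

theorem Dfun_eq_trigSeries (K p i : ℕ) (x : ℝ) :
    Dfun K p i x = trigSeries (fun l : ℤ => ((_root_.sinc (π * (i / K + l)) ^ (p + 1) : ℝ) : ℂ))
      (fun l => i + l * K) x := by
  simp only [Dfun, Dterm, trigSeries]
  push_cast
  rfl

theorem summable_norm_sinc_pow_coeff (K : ℕ) {p : ℕ} (hp : 1 ≤ p) (i : ℕ) :
    Summable fun l : ℤ => ‖((_root_.sinc (π * (i / K + l)) ^ (p + 1) : ℝ) : ℂ)‖ := by
  simpa only [Complex.norm_real, Real.norm_eq_abs, abs_pow] using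
    summable_abs_sinc_pi_mul_pow (i / K) (by omega : 2 ≤ p + 1)

theorem integral_Dfun_mul_conj_Dfun {p K i j : ℕ} (hp : 1 ≤ p) (hi : 1 ≤ i) (hiK : i ≤ K)
    (hj : 1 ≤ j) (hjK : j ≤ K) :
    ∫ x in (0 : ℝ)..1, Dfun K p i x * conj (Dfun K p j x) =
      if i = j then (Qs (2 * p + 2) (i / K) : ℂ) else 0 := by
  simp_rw [Dfun_eq_trigSeries]
  have ha := summable_norm_sinc_pow_coeff K hp i
  split_ifs with hij
  · subst hij
    have hν : Function.Injective fun l : ℤ => (i : ℤ) + l * K := fun l l' h =>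
      mul_right_cancel₀ (by omega : (K : ℤ) ≠ 0) (add_left_cancel h)
    rw [integral_trigSeries_mul_conj_self ha ha hν, Qs, Complex.ofReal_tsum]
    refine tsum_congr fun l => ?_
    rw [Complex.conj_ofReal, ← Complex.ofReal_mul, ← pow_add, two_mul, add_add_add_comm]
  · refine integral_trigSeries_mul_conj_eq_zero ha (summable_norm_sinc_pow_coeff K hp j)
      fun l l' h => hij ?_
    exact_mod_cast Int.eq_of_add_mul_eq_add_mul h (by rw [abs_lt]; omega)

theorem stmt3_general (p K : ℕ) (hp : 1 ≤ p) :
    ∀ i j, 1 ≤ i → i ≤ K → 1 ≤ j → j ≤ K →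
      (∫ x in (0:ℝ)..1, phiDR K p i x * conj (phiDR K p j x)) =
        if i = j then 1 else 0 := by
  intro i j hi hiK hj hjK
  simp_rw [phiDR, map_div₀, Complex.conj_ofReal, div_mul_div_comm, ← Complex.ofReal_mul]
  rw [intervalIntegral.integral_div, integral_Dfun_mul_conj_Dfun hp hi hiK hj hjK]
  split_ifs with hij
  · have hQ : 0 < Qs (2 * p + 2) (i / K) := Qs_pos ⟨p + 1, by ring⟩ (by omega) _
    subst hij
    rw [Real.mul_self_sqrt hQ.le, div_self (Complex.ofReal_ne_zero.mpr hQ.ne')]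
  · exact zero_div _

theorem stmt3 (p K : ℕ) (hp : 1 ≤ p) (hK : 1 ≤ K) :
    ∀ i j, 1 ≤ i → i ≤ K → 1 ≤ j → j ≤ K →
      (∫ x in (0:ℝ)..1, phiDR K p i x * conj (phiDR K p j x)) =
        if i = j then 1 else 0 :=
  stmt3_general p K hp
end

section
/- Let p ≥ 1 be an integer and let P be a complex polynomial of degree 2p satisfying the self-reciprocity P(z) = z^{2p}·P(1/z) for all z ≠ 0, whose 2p roots are simple, nonzero, and can be listed as r_1,…,r_p, r_1^{−1},…,r_p^{−1} with 0 < |r_j| < 1 for each j (in particular P has no roots on the unit circle). Then for any integer d and any complex numbers α_0, α_1, …, α_{2p}, ∫_0^1 [ Σ_{l=0}^{2p} α_l · exp(−2πi·(d+l)·u) ] / P(exp(−2πi·u)) du = Σ_{j=1}^{p} Σ_{l=0}^{2p} (α_l / P'(r_j)) · r_j^{ |d+l−1| + (2p−2)·𝟙(d+l ≤ 0) }, where P' is the derivative of P and 𝟙(A) equals 1 if A holds and 0 otherwise. -/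
/-!
Expanding `1/P` in partial fractions, `1/P(z) = ∑ ρ, 1/(P'(ρ)(z - ρ))` over the simple roots `ρ`,
reduces the integral to the coefficients `I(m, ρ) = ∫ z^m/(z - ρ)` over the unit circle
`z = e^{-2πiu}`. Since `z^{m+1} = z^m (z - ρ) + ρ z^m`, they satisfy `I(m+1) = δ_{m,0} + ρ I(m)`,
and they are bounded in `m`; the only bounded solution of this recurrence is `ρ^{m-1}[m ≥ 1]`
for `|ρ| < 1` and `-ρ^{m-1}[m ≤ 0]` for `|ρ| > 1`. Differentiating `P(z) = z^{2p} P(1/z)` at a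
root gives `P'(r⁻¹) = -r^{2-2p} P'(r)`, so the terms of `r` and `r⁻¹` combine into a single
power of `r`.
-/

open Real Complex Polynomial

theorem eq_zero_of_bounded_of_add_one_eq_mul {𝕜 : Type*} [NormedField 𝕜] {f : ℤ → 𝕜}
    {c : 𝕜} (hc : ‖c‖ ≠ 1) (hf : ∃ C, ∀ m, ‖f m‖ ≤ C) (hrec : ∀ m, f (m + 1) = c * f m) :
    f = 0 := by
  wlog hlt : ‖c‖ < 1 generalizing f c
  · -- Run the recurrence backwards: `m ↦ f (-m)` satisfies it with ratio `c⁻¹`.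
    have hc0 : c ≠ 0 := by rintro rfl; simp at hlt
    have hrev : ∀ m, f (-(m + 1)) = c⁻¹ * f (-m) := fun m => by
      rw [show -m = -(m + 1) + 1 by ring, hrec, inv_mul_cancel_left₀ hc0]
    have := this (by simpa using hc) (hf.imp fun C hC m => hC (-m)) hrev
      (by rw [norm_inv]; exact inv_lt_one_of_one_lt₀ (lt_of_le_of_ne (not_lt.mp hlt) hc.symm))
    exact funext fun m => by simpa using congrFun this (-m)
  obtain ⟨C, hC⟩ := hf
  have hpow : ∀ (k : ℕ) m, f (m + k) = c ^ k * f m := by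
    intro k
    induction k with
    | zero => simp
    | succ k ih => intro m; rw [Nat.cast_succ, ← add_assoc, hrec, ih, pow_succ]; ring
  funext m
  have hbound : ∀ k : ℕ, ‖f m‖ ≤ ‖c‖ ^ k * C := fun k => by
    rw [show m = m - k + k by ring, hpow, norm_mul, norm_pow]
    exact mul_le_mul_of_nonneg_left (hC _) (by positivity)
  have hlim : Filter.Tendsto (fun k : ℕ => ‖c‖ ^ k * C) Filter.atTop (nhds 0) := by
    simpa using (tendsto_pow_atTop_nhds_zero_of_lt_one (norm_nonneg c) hlt).mul_const C
  exact norm_le_zero_iff.mp (ge_of_tendsto' hlim hbound)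

theorem Lagrange.inv_eval_nodal {F ι : Type*} [Field F] [DecidableEq ι] {s : Finset ι}
    {v : ι → F} (hvs : Set.InjOn v s) (hs : s.Nonempty) {x : F} (hx : ∀ i ∈ s, x ≠ v i) :
    (eval x (Lagrange.nodal s v))⁻¹
      = ∑ i ∈ s, Lagrange.nodalWeight s v i * (x - v i)⁻¹ := by
  refine (eq_inv_of_mul_eq_one_right ?_).symm
  simpa [Lagrange.interpolate_one hvs hs] using (Lagrange.eval_interpolate_not_at_node 1 hx).symm

theorem Polynomial.Splits.inv_eval_eq_sum_roots {K : Type*} [Field K] {P : K[X]} (hP : P.Splits)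
    (hnodup : P.roots.Nodup) (hne : P.roots ≠ 0) {z : K} (hz : ¬P.IsRoot z) :
    (P.eval z)⁻¹ = (P.roots.map fun x => (P.derivative.eval x)⁻¹ * (z - x)⁻¹).sum := by
  classical
  set s : Finset K := ⟨P.roots, hnodup⟩
  have hnodal : P = C P.leadingCoeff * Lagrange.nodal s id := by
    rw [Lagrange.nodal_eq]; exact hP.eq_prod_roots
  have hs : s.Nonempty :=
    Finset.nonempty_iff_ne_empty.mpr (by simpa [← Finset.val_eq_zero] using hne)
  have hx : ∀ x ∈ s, z ≠ id x := fun x hx h => hz (isRoot_of_mem_roots (h ▸ hx))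
  have hroot_deriv : ∀ x ∈ s, (P.derivative.eval x)⁻¹ =
      P.leadingCoeff⁻¹ * Lagrange.nodalWeight s id x := fun x hx => by
    conv_lhs => rw [hnodal, derivative_C_mul, eval_mul, eval_C, mul_inv]
    rw [Lagrange.nodalWeight_eq_eval_derivative_nodal hx, id]
  calc (P.eval z)⁻¹ = P.leadingCoeff⁻¹ * (eval z (Lagrange.nodal s id))⁻¹ := by
        conv_lhs => rw [hnodal, eval_mul, eval_C, mul_inv]
    _ = ∑ x ∈ s, (P.derivative.eval x)⁻¹ * (z - x)⁻¹ := by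
        rw [Lagrange.inv_eval_nodal Function.injective_id.injOn hs hx, Finset.mul_sum]
        exact Finset.sum_congr rfl fun x hx => by rw [hroot_deriv x hx, mul_assoc, id]
    _ = _ := rfl

theorem Polynomial.sq_mul_eval_derivative_of_selfReciprocal {𝕜 : Type*}
    [NontriviallyNormedField 𝕜] {P : 𝕜[X]} {n : ℕ}
    (hself : ∀ z : 𝕜, z ≠ 0 → P.eval z = z ^ n * P.eval z⁻¹) {r : 𝕜} (hr : r ≠ 0)
    (hroot : P.IsRoot r⁻¹) :
    r ^ 2 * P.derivative.eval r = -(r ^ n * P.derivative.eval r⁻¹) := by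
  have hrhs : HasDerivAt (fun z => z ^ n * P.eval z⁻¹)
      (n * r ^ (n - 1) * P.eval r⁻¹ + r ^ n * (P.derivative.eval r⁻¹ * -(r ^ 2)⁻¹)) r :=
    (hasDerivAt_pow n r).mul ((P.hasDerivAt r⁻¹).comp r (hasDerivAt_inv hr))
  have heq : P.derivative.eval r = r ^ n * (P.derivative.eval r⁻¹ * -(r ^ 2)⁻¹) := by
    simpa [hroot.eq_zero] using (P.hasDerivAt r).unique (hrhs.congr_of_eventuallyEq
      (Filter.eventually_of_mem (isOpen_ne.mem_nhds hr) hself))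
  rw [heq]
  field_simp

noncomputable def circleExp (m : ℤ) (u : ℝ) : ℂ := exp (-2 * π * I * m * u)

theorem norm_circleExp (m : ℤ) (u : ℝ) : ‖circleExp m u‖ = 1 := by
  simp [circleExp, norm_exp]

theorem continuous_circleExp (m : ℤ) : Continuous (circleExp m) := by
  unfold circleExp; fun_prop

theorem circleExp_add (m n : ℤ) (u : ℝ) :
    circleExp (m + n) u = circleExp m u * circleExp n u := by
  rw [circleExp, circleExp, circleExp, ← Complex.exp_add]; push_cast; ring_nf

theorem integral_circleExp (m : ℤ) :
    ∫ u in (0:ℝ)..1, circleExp m u = if m = 0 then 1 else 0 := by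
  split_ifs with hm
  · simp [circleExp, hm]
  have hc : -2 * π * I * m ≠ 0 := by simp [hm, pi_ne_zero, I_ne_zero]
  have hperiod : exp (-(2 * π * I * m)) = 1 := by
    simpa [mul_comm, mul_left_comm, mul_assoc] using exp_int_mul_two_pi_mul_I (-m)
  simp only [circleExp]
  rw [integral_exp_mul_complex hc]
  simp [hperiod]

theorem circleExp_one_sub_ne_zero {ρ : ℂ} (hρ : ‖ρ‖ ≠ 1) (u : ℝ) :
    circleExp 1 u - ρ ≠ 0 :=
  fun h => hρ (by rw [← sub_eq_zero.mp h, norm_circleExp])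

noncomputable def resolventCoeff (m : ℤ) (ρ : ℂ) : ℂ :=
  ∫ u in (0:ℝ)..1, circleExp m u / (circleExp 1 u - ρ)

theorem continuous_circleExp_div_sub (m : ℤ) {ρ : ℂ} (hρ : ‖ρ‖ ≠ 1) :
    Continuous fun u => circleExp m u / (circleExp 1 u - ρ) :=
  (continuous_circleExp m).div ((continuous_circleExp 1).sub continuous_const)
    (circleExp_one_sub_ne_zero hρ)

theorem norm_resolventCoeff_le (m : ℤ) {ρ : ℂ} (hρ : ‖ρ‖ ≠ 1) :
    ‖resolventCoeff m ρ‖ ≤ |1 - ‖ρ‖|⁻¹ := by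
  have hpos : 0 < |1 - ‖ρ‖| := abs_pos.mpr (sub_ne_zero.mpr hρ.symm)
  have hbound : ∀ u, ‖circleExp m u / (circleExp 1 u - ρ)‖ ≤ |1 - ‖ρ‖|⁻¹ := fun u => by
    rw [norm_div, norm_circleExp, one_div]
    refine inv_anti₀ hpos ?_
    simpa [norm_circleExp] using abs_norm_sub_norm_le (circleExp 1 u) ρ
  simpa [resolventCoeff] using
    intervalIntegral.norm_integral_le_of_norm_le_const (a := 0) (b := 1) fun u _ => hbound u

theorem resolventCoeff_add_one (m : ℤ) {ρ : ℂ} (hρ : ‖ρ‖ ≠ 1) :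
    resolventCoeff (m + 1) ρ = (if m = 0 then 1 else 0) + ρ * resolventCoeff m ρ := by
  have hsplit : ∀ u, circleExp (m + 1) u / (circleExp 1 u - ρ)
      = circleExp m u + ρ * (circleExp m u / (circleExp 1 u - ρ)) := fun u => by
    rw [circleExp_add]
    field_simp [circleExp_one_sub_ne_zero hρ u]
    ring
  simp only [resolventCoeff, hsplit]
  rw [intervalIntegral.integral_add ((continuous_circleExp m).intervalIntegrable 0 1)
    (((continuous_circleExp_div_sub m hρ).intervalIntegrable 0 1).const_mul ρ),
    intervalIntegral.integral_const_mul, integral_circleExp]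

theorem resolventCoeff_eq_of_bounded_of_add_one {ρ : ℂ} (hρ : ‖ρ‖ ≠ 1) {V : ℤ → ℂ}
    (hV : ∃ C, ∀ m, ‖V m‖ ≤ C)
    (hrec : ∀ m, V (m + 1) = (if m = 0 then 1 else 0) + ρ * V m)
    (m : ℤ) : resolventCoeff m ρ = V m := by
  obtain ⟨C, hC⟩ := hV
  have hdiff := eq_zero_of_bounded_of_add_one_eq_mul (f := fun m => resolventCoeff m ρ - V m) hρ
    ⟨|1 - ‖ρ‖|⁻¹ + C, fun m => (norm_sub_le _ _).trans
      (add_le_add (norm_resolventCoeff_le m hρ) (hC m))⟩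
    (fun m => by simp only [resolventCoeff_add_one m hρ, hrec]; ring)
  exact sub_eq_zero.mp (congrFun hdiff m)

theorem resolventCoeff_of_norm_lt_one {ρ : ℂ} (hρ : ‖ρ‖ < 1) (m : ℤ) :
    resolventCoeff m ρ = if 1 ≤ m then ρ ^ (m - 1) else 0 := by
  refine resolventCoeff_eq_of_bounded_of_add_one (V := fun m => if 1 ≤ m then ρ ^ (m - 1) else 0)
    hρ.ne ⟨1, fun m => ?_⟩ (fun m => ?_) m
  · split_ifs with hm
    · lift m - 1 to ℕ using (by omega) with n
      simpa using pow_le_one₀ (norm_nonneg ρ) hρ.le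
    · simp
  · rcases lt_trichotomy m 0 with hm | rfl | hm
    · simp [show ¬ 1 ≤ m + 1 by omega, show ¬ 1 ≤ m by omega, hm.ne]
    · simp
    · obtain ⟨n, rfl⟩ : ∃ n : ℕ, m = n + 1 := ⟨(m - 1).toNat, by omega⟩
      have hn : (n : ℤ) + 1 + 1 - 1 = (n + 1 : ℕ) := by push_cast; ring
      simp only [hn, add_sub_cancel_right, zpow_natCast, pow_succ']
      simp [show (n : ℤ) + 1 ≠ 0 by omega, show ¬(n : ℤ) + 1 < 0 by omega]

theorem resolventCoeff_of_one_lt_norm {ρ : ℂ} (hρ : 1 < ‖ρ‖) (m : ℤ) :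
    resolventCoeff m ρ = if m ≤ 0 then -ρ ^ (m - 1) else 0 := by
  have hρ0 : ρ ≠ 0 := norm_pos_iff.mp (zero_lt_one.trans hρ)
  refine resolventCoeff_eq_of_bounded_of_add_one (V := fun m => if m ≤ 0 then -ρ ^ (m - 1) else 0)
    hρ.ne' ⟨1, fun m => ?_⟩ (fun m => ?_) m
  · split_ifs with hm
    · rw [norm_neg, norm_zpow]
      exact zpow_le_one_of_nonpos₀ hρ.le (by omega)
    · simp
  · rcases lt_trichotomy m 0 with hm | rfl | hm
    · simp only [show m + 1 ≤ 0 by omega, hm.le, hm.ne, add_sub_cancel_right,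
        zpow_sub_one₀ hρ0, if_true, if_false]
      rw [zero_add, mul_neg, mul_comm (ρ ^ m), mul_inv_cancel_left₀ hρ0]
    · simp [hρ0]
    · simp [show ¬ m + 1 ≤ 0 by omega, show ¬ m ≤ 0 by omega, hm.ne']

theorem resolventCoeff_reciprocal_pair {r a b : ℂ} {n : ℕ} (hr0 : r ≠ 0) (hr1 : ‖r‖ < 1)
    (hab : r ^ 2 * a = -(r ^ n * b)) (m : ℤ) :
    a⁻¹ * resolventCoeff m r + b⁻¹ * resolventCoeff m r⁻¹
      = a⁻¹ * r ^ (|m - 1| + ((n : ℤ) - 2) * if m ≤ 0 then 1 else 0) := by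
  have hb : b⁻¹ = -(r ^ ((n : ℤ) - 2) * a⁻¹) := by
    rcases eq_or_ne a 0 with rfl | ha
    · simp_all
    · refine inv_eq_of_mul_eq_one_left ?_
      rw [zpow_sub₀ hr0, zpow_natCast]
      field_simp
      linear_combination -hab
  have hinv : 1 < ‖r⁻¹‖ := by
    rw [norm_inv]; exact one_lt_inv₀ (norm_pos_iff.mpr hr0) |>.mpr hr1
  rw [resolventCoeff_of_norm_lt_one hr1, resolventCoeff_of_one_lt_norm hinv, hb]
  split_ifs with h1 h2 h2
  · omega
  · rw [abs_of_nonneg (by omega), mul_zero, add_zero, mul_zero, add_zero]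
  · rw [abs_of_nonpos (by omega), inv_zpow', mul_zero, zero_add, neg_mul_neg, mul_one,
      zpow_add₀ hr0]
    ring
  · omega

theorem eval_circleExp_ne_zero {P : ℂ[X]} (hne : P.roots ≠ 0)
    (hcircle : ∀ x ∈ P.roots, ‖x‖ ≠ 1) (u : ℝ) : P.eval (circleExp 1 u) ≠ 0 := fun h =>
  hcircle _ ((mem_roots fun hP => hne (by rw [hP, roots_zero])).mpr h) (norm_circleExp 1 u)

theorem integral_circleExp_div_eval {P : ℂ[X]} (hnodup : P.roots.Nodup) (hne : P.roots ≠ 0)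
    (hcircle : ∀ x ∈ P.roots, ‖x‖ ≠ 1) (m : ℤ) :
    ∫ u in (0:ℝ)..1, circleExp m u / P.eval (circleExp 1 u)
      = (P.roots.map fun x => (P.derivative.eval x)⁻¹ * resolventCoeff m x).sum := by
  set s : Finset ℂ := ⟨P.roots, hnodup⟩
  calc _ = ∫ u in (0:ℝ)..1,
        ∑ x ∈ s, (P.derivative.eval x)⁻¹ * (circleExp m u / (circleExp 1 u - x)) := by
        refine intervalIntegral.integral_congr fun u _ => ?_
        rw [div_eq_mul_inv, (IsAlgClosed.splits P).inv_eval_eq_sum_roots hnodup hne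
          (eval_circleExp_ne_zero hne hcircle u)]
        change circleExp m u * ∑ x ∈ s, _ = _
        rw [Finset.mul_sum]
        exact Finset.sum_congr rfl fun x _ => by ring
    _ = ∑ x ∈ s, (P.derivative.eval x)⁻¹ * resolventCoeff m x := by
        rw [intervalIntegral.integral_finsetSum fun x hx =>
          ((continuous_circleExp_div_sub m (hcircle x hx)).intervalIntegrable 0 1).const_mul _]
        simp only [intervalIntegral.integral_const_mul]
        rfl

theorem stmt8_general (p : ℕ) (hp : 1 ≤ p) (P : Polynomial ℂ)
    (hself : ∀ z : ℂ, z ≠ 0 → P.eval z = z ^ (2 * p) * P.eval z⁻¹)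
    (r : Fin p → ℂ)
    (hr : ∀ j, 0 < ‖r j‖ ∧ ‖r j‖ < 1)
    (hroots : P.roots =
      Multiset.map r Finset.univ.val + Multiset.map (fun j => (r j)⁻¹) Finset.univ.val)
    (hsimple : (Multiset.map r Finset.univ.val +
      Multiset.map (fun j => (r j)⁻¹) Finset.univ.val).Nodup)
    (d : ℤ) (α : Fin (2 * p + 1) → ℂ) :
    (∫ u in (0:ℝ)..1,
        (∑ l : Fin (2 * p + 1),
            α l * Complex.exp (-2 * (Real.pi : ℂ) * Complex.I * ((d : ℂ) + ((l : ℕ) : ℂ)) * (u : ℂ))) /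
          P.eval (Complex.exp (-2 * (Real.pi : ℂ) * Complex.I * (u : ℂ)))) =
      ∑ j : Fin p, ∑ l : Fin (2 * p + 1),
        α l / P.derivative.eval (r j) *
          r j ^ (|d + ((l : ℕ) : ℤ) - 1| +
            (2 * (p : ℤ) - 2) * (if d + ((l : ℕ) : ℤ) ≤ 0 then 1 else 0)) := by
  have hr0 : ∀ j, r j ≠ 0 := fun j => norm_pos_iff.mp (hr j).1
  have hne : P.roots ≠ 0 := by simp [hroots]; omega
  have hcircle : ∀ x ∈ P.roots, ‖x‖ ≠ 1 := by
    simp only [hroots, Multiset.mem_add, Multiset.mem_map, Finset.mem_val, Finset.mem_univ,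
      true_and]
    rintro x (⟨j, rfl⟩ | ⟨j, rfl⟩)
    · exact (hr j).2.ne
    · simpa using (hr j).2.ne
  have hint : ∀ m, IntervalIntegrable (fun u => circleExp m u / P.eval (circleExp 1 u))
      MeasureTheory.volume 0 1 := fun m =>
    ((continuous_circleExp m).div (P.continuous.comp (continuous_circleExp 1))
      (eval_circleExp_ne_zero hne hcircle)).intervalIntegrable 0 1
  calc _ = ∑ l : Fin (2 * p + 1),
        α l * ∫ u in (0:ℝ)..1, circleExp (d + (l : ℕ)) u / P.eval (circleExp 1 u) := by
        simp only [← intervalIntegral.integral_const_mul]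
        rw [← intervalIntegral.integral_finsetSum fun l _ => (hint _).const_mul _]
        refine intervalIntegral.integral_congr fun u _ => ?_
        simp [Finset.sum_div, circleExp, mul_div_assoc]
    _ = _ := by
        simp only [integral_circleExp_div_eval (hroots ▸ hsimple) hne hcircle, hroots,
          Multiset.map_add, Multiset.sum_add, Multiset.map_map, ← Finset.sum_eq_multiset_sum,
          Function.comp_apply, ← Finset.sum_add_distrib, Finset.mul_sum]
        rw [Finset.sum_comm]
        refine Finset.sum_congr rfl fun j _ => Finset.sum_congr rfl fun l _ => ?_
        rw [resolventCoeff_reciprocal_pair (hr0 j) (hr j).2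
          (sq_mul_eval_derivative_of_selfReciprocal hself (hr0 j)
            (isRoot_of_mem_roots (by simp [hroots])))]
        push_cast
        ring

theorem stmt8 (p : ℕ) (hp : 1 ≤ p) (P : Polynomial ℂ)
    (hdeg : P.natDegree = 2 * p)
    (hself : ∀ z : ℂ, z ≠ 0 → P.eval z = z ^ (2 * p) * P.eval z⁻¹)
    (r : Fin p → ℂ)
    (hr : ∀ j, 0 < ‖r j‖ ∧ ‖r j‖ < 1)
    (hroots : P.roots =
      Multiset.map r Finset.univ.val + Multiset.map (fun j => (r j)⁻¹) Finset.univ.val)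
    (hsimple : (Multiset.map r Finset.univ.val +
      Multiset.map (fun j => (r j)⁻¹) Finset.univ.val).Nodup)
    (d : ℤ) (α : Fin (2 * p + 1) → ℂ) :
    (∫ u in (0:ℝ)..1,
        (∑ l : Fin (2 * p + 1),
            α l * Complex.exp (-2 * (Real.pi : ℂ) * Complex.I * ((d : ℂ) + ((l : ℕ) : ℂ)) * (u : ℂ))) /
          P.eval (Complex.exp (-2 * (Real.pi : ℂ) * Complex.I * (u : ℂ)))) =
      ∑ j : Fin p, ∑ l : Fin (2 * p + 1),
        α l / P.derivative.eval (r j) *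
          r j ^ (|d + ((l : ℕ) : ℤ) - 1| +
            (2 * (p : ℤ) - 2) * (if d + ((l : ℕ) : ℤ) ≤ 0 then 1 else 0)) :=
  stmt8_general p hp P hself r hr hroots hsimple d α
end
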